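/- Let G be a totally disconnected locally compact group, φ : G → G a topological automorphism, and U an open compact subgroup of G. Let C(φ⁻¹,U) = ⋂_{n=0}^∞ φⁿ(U) be the cotrajectory of U under φ⁻¹. Then H_top(φ,U) = log [φ(C(φ⁻¹,U)) : C(φ⁻¹,U)], where the index counts cosets of C(φ⁻¹,U) meeting φ(C(φ⁻¹,U)). -/

import Mathlib

/-!
Write `Cₙ = Cₙ(φ,U)` and `Dₙ = Cₙ(φ⁻¹,U) = ⋂_{i<n} φⁱ(U)`. Since `φⁿ(Cₙ₊₁) = Dₙ₊₁`, the step
`[Cₙ₊₁ : Cₙ₊₂]` of the tower `U = C₁ ≥ C₂ ≥ ⋯` equals `[φ(Dₙ₊₁) : φ(Dₙ₊₁) ∩ U]`. The compact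
subgroups `φ(Dₙ₊₁)` decrease to `φ(C)`, `C = C(φ⁻¹,U)`, so by compactness `φ(Dₙ₊₁) ⊆ φ(C) U` for
large `n`, and from then on the step is `[φ(C) : φ(C) ∩ U] = [φ(C) : C]` (as `C = U ∩ φ(C)`).
Thus `[U : Cₙ]` is eventually geometric with this ratio, and `log [U : Cₙ] / n` tends to its
logarithm.
-/

open Filter Topology

variable {G : Type*} [Group G]

/-- The `n`-th `φ`-cotrajectory `Cₙ(φ,U) = ⋂_{i<n} φ^{-i}(U)`. -/
def cotrajN (φ : MulAut G) (U : Subgroup G) (n : ℕ) : Subgroup G :=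
  ⨅ i ∈ Finset.range n, Subgroup.comap (φ ^ i).toMonoidHom U

/-- `cₙ = [U : Cₙ(φ,U)]`. -/
noncomputable def entIdx (φ : MulAut G) (U : Subgroup G) (n : ℕ) : ℕ :=
  (cotrajN φ U n).relIndex U

/-- The topological entropy of `φ` with respect to `U`,
`H_top(φ,U) = lim_n log cₙ / n` (the limit exists, so it equals the `limsup`). -/
noncomputable def Htop (φ : MulAut G) (U : Subgroup G) : ℝ :=
  limsup (fun n : ℕ => Real.log (entIdx φ U n) / n) atTop

/-- The `φ`-cotrajectory `C(φ,U) = ⋂_{n≥0} φ^{-n}(U)`; note `C(φ⁻¹,U) = ⋂_{n≥0} φ^n(U)`. -/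
def cotraj (φ : MulAut G) (U : Subgroup G) : Subgroup G :=
  ⨅ n : ℕ, Subgroup.comap (φ ^ n).toMonoidHom U

open Pointwise

lemma Subgroup.relIndex_eq_of_le_of_subset_mul {H K V : Subgroup G} (hHK : H ≤ K)
    (hcov : (K : Set G) ⊆ (H : Set G) * (V : Set G)) : V.relIndex K = V.relIndex H := by
  have hsurj : Function.Surjective (quotientSubgroupOfEmbeddingOfLE V hHK) := by
    rintro ⟨k, hk⟩
    obtain ⟨h, hh, v, hv, rfl⟩ := hcov hk
    refine ⟨QuotientGroup.mk ⟨h, hh⟩, QuotientGroup.eq.mpr ?_⟩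
    simpa [Subgroup.mem_subgroupOf] using hv
  exact (Nat.card_eq_of_bijective _ ⟨(quotientSubgroupOfEmbeddingOfLE V hHK).injective, hsurj⟩).symm

section TopologicalGroup

variable [TopologicalSpace G] [IsTopologicalGroup G]

lemma Subgroup.relIndex_ne_zero_of_isOpen_of_isCompact {V K : Subgroup G}
    (hV : IsOpen (V : Set G)) (hK : IsCompact (K : Set G)) : V.relIndex K ≠ 0 := by
  have : CompactSpace K := isCompact_iff_compactSpace.mp hK
  have : Finite (K ⧸ V.subgroupOf K) :=
    Subgroup.quotient_finite_of_isOpen _ (hV.preimage continuous_subtype_val)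
  exact Subgroup.index_ne_zero_of_finite

lemma Subgroup.eventually_relIndex_eq_iInf [T2Space G] {V : Subgroup G}
    (hV : IsOpen (V : Set G)) {K : ℕ → Subgroup G} (hK : Antitone K)
    (hKc : ∀ n, IsCompact (K n : Set G)) :
    ∀ᶠ n in atTop, V.relIndex (K n) = V.relIndex (⨅ n, K n) := by
  obtain ⟨N, hN⟩ : ∃ N, (K N : Set G) ⊆ ((⨅ n, K n : Subgroup G) : Set G) * (V : Set G) := by
    refine exists_subset_nhds_of_isCompact (hK.directed_ge.mono_comp _ fun _ _ h => h) hKc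
      fun x hx => (hV.mul_left).mem_nhds ⟨x, ?_, 1, V.one_mem, mul_one x⟩
    simpa [Subgroup.coe_iInf] using hx
  filter_upwards [eventually_ge_atTop N] with n hn
  exact Subgroup.relIndex_eq_of_le_of_subset_mul (iInf_le K n) (subset_trans (hK hn) hN)

lemma IsTopologicalGroup.t2Space_of_totallyDisconnectedSpace [TotallyDisconnectedSpace G] :
    T2Space G :=
  IsTopologicalGroup.t2Space_iff_one_closed.mpr <| by
    rw [← connectedComponent_eq_singleton (1 : G)]
    exact isClosed_connectedComponent

end TopologicalGroup

lemma tendsto_log_div_of_eventually_geometric {c : ℕ → ℝ} {a : ℝ} {N : ℕ}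
    (hrec : ∀ n ≥ N, c (n + 1) = a * c n) (hN : 0 < c N) (ha : 0 < a) :
    Tendsto (fun n : ℕ => Real.log (c n) / n) atTop (𝓝 (Real.log a)) := by
  have hgeom : ∀ n ≥ N, c n = c N * a ^ (n - N) := by
    intro n hn
    induction n, hn using Nat.le_induction with
    | base => simp
    | succ n hn ih => rw [hrec n hn, ih, Nat.sub_add_comm hn, pow_succ]; ring
  have hlog : ∀ᶠ n : ℕ in atTop,
      (Real.log (c N) - N * Real.log a) / n + Real.log a = Real.log (c n) / n := by
    filter_upwards [eventually_ge_atTop N, eventually_gt_atTop 0] with n hn hpos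
    rw [hgeom n hn, Real.log_mul hN.ne' (pow_pos ha _).ne', Real.log_pow, Nat.cast_sub hn]
    field_simp
    ring
  simpa using (tendsto_const_div_atTop_nhds_zero_nat _).add_const (Real.log a) |>.congr' hlog

namespace MulAut

variable (φ : MulAut G)

lemma pow_mul_inv_pow_of_le {i n : ℕ} (h : i ≤ n) : φ ^ i * φ⁻¹ ^ n = φ⁻¹ ^ (n - i) := by
  obtain ⟨k, rfl⟩ := Nat.exists_eq_add_of_le h
  rw [Nat.add_sub_cancel_left]
  group

lemma inv_pow_mul_pow_of_le {i n : ℕ} (h : i ≤ n) : φ⁻¹ ^ i * φ ^ n = φ ^ (n - i) := by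
  simpa using pow_mul_inv_pow_of_le φ⁻¹ h

lemma map_eq_comap_inv (X : Subgroup G) :
    X.map φ.toMonoidHom = X.comap φ⁻¹.toMonoidHom :=
  Subgroup.map_equiv_eq_comap_symm' φ X

lemma map_pow_succ (X : Subgroup G) (n : ℕ) :
    X.map (φ ^ (n + 1)).toMonoidHom = (X.map (φ ^ n).toMonoidHom).map φ.toMonoidHom := by
  rw [Subgroup.map_map]
  congr 1
  ext x
  simp [pow_succ', MulAut.mul_apply]

end MulAut

section Cotrajectory

variable (φ : MulAut G) (U : Subgroup G)

lemma mem_cotrajN {n : ℕ} {x : G} : x ∈ cotrajN φ U n ↔ ∀ i < n, (φ ^ i) x ∈ U := by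
  simp [cotrajN]

lemma mem_cotraj {x : G} : x ∈ cotraj φ U ↔ ∀ n, (φ ^ n) x ∈ U := by
  simp [cotraj]

lemma cotrajN_zero : cotrajN φ U 0 = ⊤ := by
  simp [cotrajN]

lemma cotrajN_succ (n : ℕ) : cotrajN φ U (n + 1) = cotrajN φ U n ⊓ U.comap (φ ^ n).toMonoidHom := by
  ext x
  simp only [Subgroup.mem_inf, mem_cotrajN, Nat.forall_lt_succ_right, Subgroup.mem_comap,
    MulEquiv.coe_toMonoidHom]

lemma cotrajN_succ' (n : ℕ) : cotrajN φ U (n + 1) = U ⊓ (cotrajN φ U n).comap φ.toMonoidHom := by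
  ext x
  simp only [Subgroup.mem_inf, mem_cotrajN, Nat.forall_lt_succ_left', Subgroup.mem_comap,
    MulEquiv.coe_toMonoidHom, pow_zero, MulAut.one_apply, pow_succ, MulAut.mul_apply]

lemma cotrajN_antitone : Antitone (cotrajN φ U) :=
  antitone_nat_of_succ_le fun n => (cotrajN_succ φ U n).trans_le inf_le_left

lemma cotrajN_succ_le (n : ℕ) : cotrajN φ U (n + 1) ≤ U :=
  (cotrajN_succ' φ U n).trans_le inf_le_left

lemma cotraj_eq_iInf_cotrajN_succ : cotraj φ U = ⨅ n, cotrajN φ U (n + 1) := by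
  ext x
  simp only [mem_cotraj, Subgroup.mem_iInf, mem_cotrajN]
  exact ⟨fun h n i _ => h i, fun h i => h i i (Nat.lt_succ_self i)⟩

lemma cotraj_eq_inf_comap : cotraj φ U = U ⊓ (cotraj φ U).comap φ.toMonoidHom := by
  ext x
  rw [Subgroup.mem_inf, Subgroup.mem_comap, mem_cotraj, mem_cotraj, ← Nat.and_forall_add_one]
  simp only [pow_zero, MulAut.one_apply, pow_succ, MulAut.mul_apply, MulEquiv.coe_toMonoidHom]

lemma map_pow_cotrajN (n : ℕ) :
    (cotrajN φ U (n + 1)).map (φ ^ n).toMonoidHom = cotrajN φ⁻¹ U (n + 1) := by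
  ext y
  simp only [Subgroup.mem_map, mem_cotrajN, Nat.lt_succ_iff]
  constructor
  · rintro ⟨x, hx, rfl⟩ j hj
    rw [MulEquiv.coe_toMonoidHom, ← MulAut.mul_apply, MulAut.inv_pow_mul_pow_of_le φ hj]
    exact hx _ (Nat.sub_le n j)
  · intro hy
    refine ⟨(φ⁻¹ ^ n) y, fun i hi => ?_, ?_⟩
    · rw [← MulAut.mul_apply, MulAut.pow_mul_inv_pow_of_le φ hi]
      exact hy _ (Nat.sub_le n i)
    · rw [MulEquiv.coe_toMonoidHom, ← MulAut.mul_apply, inv_pow, mul_inv_cancel, MulAut.one_apply]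

lemma relIndex_map_cotraj_inv :
    U.relIndex ((cotraj φ⁻¹ U).map φ.toMonoidHom) =
      (cotraj φ⁻¹ U).relIndex ((cotraj φ⁻¹ U).map φ.toMonoidHom) := by
  have h := cotraj_eq_inf_comap φ⁻¹ U
  rw [← MulAut.map_eq_comap_inv] at h
  rw [← Subgroup.inf_relIndex_right, ← h]

lemma entIdx_add_two (n : ℕ) :
    entIdx φ U (n + 2) =
      U.relIndex ((cotrajN φ⁻¹ U (n + 1)).map φ.toMonoidHom) * entIdx φ U (n + 1) := by
  have hstep : (cotrajN φ U (n + 2)).relIndex (cotrajN φ U (n + 1)) =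
      U.relIndex ((cotrajN φ⁻¹ U (n + 1)).map φ.toMonoidHom) := by
    rw [cotrajN_succ φ U (n + 1), Subgroup.inf_relIndex_left, Subgroup.relIndex_comap,
      MulAut.map_pow_succ, map_pow_cotrajN]
  rw [entIdx, entIdx, ← hstep]
  exact (Subgroup.relIndex_mul_relIndex _ _ _ (cotrajN_antitone φ U (Nat.le_succ _))
    (cotrajN_succ_le φ U n)).symm

end Cotrajectory

section CotrajectoryTopology

variable [TopologicalSpace G] [T2Space G] {φ : MulAut G} {U : Subgroup G}

lemma isCompact_cotrajN_inv_succ (hφ : Continuous φ) (hUc : IsCompact (U : Set G))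
    (n : ℕ) : IsCompact (cotrajN φ⁻¹ U (n + 1) : Set G) := by
  induction n with
  | zero => simpa [cotrajN_succ', cotrajN_zero] using hUc
  | succ n ih =>
    rw [cotrajN_succ', ← MulAut.map_eq_comap_inv, Subgroup.coe_inf]
    exact hUc.inter_right (ih.image hφ).isClosed

lemma entIdx_succ_ne_zero [IsTopologicalGroup G] (hφ : Continuous φ) (hUo : IsOpen (U : Set G))
    (hUc : IsCompact (U : Set G)) (n : ℕ) : entIdx φ U (n + 1) ≠ 0 := by
  induction n with
  | zero => simp [entIdx, cotrajN_succ', cotrajN_zero]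
  | succ n ih =>
    rw [entIdx_add_two]
    exact mul_ne_zero (Subgroup.relIndex_ne_zero_of_isOpen_of_isCompact hUo
      ((isCompact_cotrajN_inv_succ hφ hUc n).image hφ)) ih

lemma eventually_entIdx_succ_eq [IsTopologicalGroup G] (hφ : Continuous φ)
    (hUo : IsOpen (U : Set G)) (hUc : IsCompact (U : Set G)) :
    ∀ᶠ n in atTop,
      entIdx φ U (n + 1) = U.relIndex ((cotraj φ⁻¹ U).map φ.toMonoidHom) * entIdx φ U n := by
  have hstable := Subgroup.eventually_relIndex_eq_iInf hUo
    (K := fun n => (cotrajN φ⁻¹ U (n + 1)).map φ.toMonoidHom)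
    (fun m n h => Subgroup.map_mono (cotrajN_antitone φ⁻¹ U (Nat.succ_le_succ h)))
    (fun n => (isCompact_cotrajN_inv_succ hφ hUc n).image hφ)
  rw [← Subgroup.map_iInf _ φ.injective, ← cotraj_eq_iInf_cotrajN_succ] at hstable
  obtain ⟨N, hN⟩ := hstable.exists_forall_of_atTop
  filter_upwards [eventually_ge_atTop (N + 1)] with n hn
  obtain ⟨m, rfl⟩ := Nat.exists_eq_add_of_le' (Nat.one_le_of_lt hn)
  rw [entIdx_add_two, hN m (by omega)]

lemma relIndex_map_cotraj_inv_ne_zero [IsTopologicalGroup G] (hφ : Continuous φ)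
    (hUo : IsOpen (U : Set G)) (hUc : IsCompact (U : Set G)) :
    U.relIndex ((cotraj φ⁻¹ U).map φ.toMonoidHom) ≠ 0 := by
  have hle : cotraj φ⁻¹ U ≤ cotrajN φ⁻¹ U 1 :=
    (cotraj_eq_iInf_cotrajN_succ φ⁻¹ U).trans_le (iInf_le _ 0)
  exact fun h => Subgroup.relIndex_ne_zero_of_isOpen_of_isCompact hUo
    ((isCompact_cotrajN_inv_succ hφ hUc 0).image hφ)
    (Subgroup.relIndex_eq_zero_of_le_right (Subgroup.map_mono hle) h)

end CotrajectoryTopology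

theorem limit_free_formula_general [TopologicalSpace G] [IsTopologicalGroup G]
    [TotallyDisconnectedSpace G]
    (φ : MulAut G) (hφ : Continuous φ)
    (U : Subgroup G) (hUo : IsOpen (U : Set G)) (hUc : IsCompact (U : Set G)) :
    Htop φ U =
      Real.log ((cotraj φ⁻¹ U).relIndex (Subgroup.map φ.toMonoidHom (cotraj φ⁻¹ U))) := by
  have : T2Space G := IsTopologicalGroup.t2Space_of_totallyDisconnectedSpace
  obtain ⟨N, hN⟩ := (eventually_entIdx_succ_eq hφ hUo hUc).exists_forall_of_atTop
  have hlim := tendsto_log_div_of_eventually_geometric (c := fun n => (entIdx φ U n : ℝ))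
    (a := U.relIndex ((cotraj φ⁻¹ U).map φ.toMonoidHom)) (N := N + 1)
    (fun n hn => by exact_mod_cast hN n (by omega))
    (by exact_mod_cast Nat.pos_of_ne_zero (entIdx_succ_ne_zero hφ hUo hUc N))
    (by exact_mod_cast Nat.pos_of_ne_zero (relIndex_map_cotraj_inv_ne_zero hφ hUo hUc))
  rw [Htop, hlim.limsup_eq, relIndex_map_cotraj_inv]

theorem limit_free_formula [TopologicalSpace G] [IsTopologicalGroup G]
    [LocallyCompactSpace G] [TotallyDisconnectedSpace G]
    (φ : MulAut G) (hφ : Continuous φ) (hφ' : Continuous φ⁻¹)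
    (U : Subgroup G) (hUo : IsOpen (U : Set G)) (hUc : IsCompact (U : Set G)) :
    Htop φ U =
      Real.log ((cotraj φ⁻¹ U).relIndex (Subgroup.map φ.toMonoidHom (cotraj φ⁻¹ U))) :=
  limit_free_formula_general φ hφ U hUo hUc
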